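/- arXiv:1908.08634 — 10 statements merged into one kernel-verified Lean document; each statement's English description precedes it below -/
import Mathlib

section
/- Let (C, ≤) be a complete lattice and let f : C → C be a surjective space function (Scott-continuous, f ⊥ = ⊥, f (a ⊔ b) = f a ⊔ f b). Define g : C → C by g c := ⨆ {x ∈ C | f x = c} (the supremum of the preimage of c under f). Then g is a right inverse of f (f (g c) = c for all c) and g preserves arbitrary infima: g (⨅ S) = ⨅ {g c | c ∈ S} for every S ⊆ C. -/
/-! The fibres of a join-preserving map are directed, so Scott continuity lets `f` commute with
the supremum of a nonempty fibre: `g c` is the largest element of the fibre of `c`. Hence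
`f a ≤ b ↔ a ≤ g b`, i.e. `g` is the upper adjoint of `f`, and upper adjoints preserve all
infima. -/

/-- A self-map is Scott continuous if it preserves suprema of (nonempty) directed sets. -/
def ScottCont {C : Type*} [CompleteLattice C] (f : C → C) : Prop :=
  ∀ D : Set C, D.Nonempty → DirectedOn (· ≤ ·) D → f (sSup D) = sSup (f '' D)

/-- A space function: Scott continuous, strict (`f ⊥ = ⊥`), preserves binary joins. -/
def IsSpaceFunction {C : Type*} [CompleteLattice C] (f : C → C) : Prop :=
  ScottCont f ∧ f ⊥ = ⊥ ∧ ∀ a b : C, f (a ⊔ b) = f a ⊔ f b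

theorem directedOn_fiber_of_map_sup {α β : Type*} [SemilatticeSup α] [SemilatticeSup β]
    {f : α → β} (hsup : ∀ a b, f (a ⊔ b) = f a ⊔ f b) (c : β) :
    DirectedOn (· ≤ ·) {x | f x = c} := by
  intro a (ha : f a = c) b (hb : f b = c)
  exact ⟨a ⊔ b, show f (a ⊔ b) = c by rw [hsup, ha, hb, sup_idem], le_sup_left, le_sup_right⟩

theorem ScottCont.map_sSup_fiber {C : Type*} [CompleteLattice C] {f : C → C}
    (hf : ScottCont f) (hsup : ∀ a b, f (a ⊔ b) = f a ⊔ f b) {c : C} (hc : c ∈ Set.range f) :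
    f (sSup {x | f x = c}) = c := by
  obtain ⟨x, hx⟩ := hc
  have hfiber : f '' {x | f x = c} = {c} := by
    ext y
    constructor
    · rintro ⟨z, hz, rfl⟩
      exact hz
    · rintro rfl
      exact ⟨x, hx, hx⟩
  rw [hf _ ⟨x, hx⟩ (directedOn_fiber_of_map_sup hsup c), hfiber, sSup_singleton]

theorem galoisConnection_sSup_fiber {α β : Type*} [CompleteLattice α] [SemilatticeSup β]
    {f : α → β} (hsup : ∀ a b, f (a ⊔ b) = f a ⊔ f b)
    (hright : ∀ c, f (sSup {x | f x = c}) = c) :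
    GaloisConnection f fun c => sSup {x | f x = c} := by
  intro a b
  constructor
  · intro hab
    have hmem : f (a ⊔ sSup {x | f x = b}) = b := by rw [hsup, hright, sup_eq_right.mpr hab]
    exact le_sup_left.trans (le_sSup hmem)
  · intro hab
    calc f a ≤ f (sSup {x | f x = b}) := Monotone.of_map_sup hsup hab
      _ = b := hright b

theorem stmt_4 {C : Type*} [CompleteLattice C]
    (f : C → C) (hf : IsSpaceFunction f) (hsurj : Function.Surjective f)
    (g : C → C) (hg : ∀ c : C, g c = sSup {x : C | f x = c}) :
    (∀ c : C, f (g c) = c) ∧ (∀ S : Set C, g (sInf S) = sInf (g '' S)) := by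
  obtain ⟨hcont, -, hsup⟩ := hf
  have hright : ∀ c, f (sSup {x | f x = c}) = c := fun c =>
    hcont.map_sSup_fiber hsup (hsurj c)
  obtain rfl : g = fun c => sSup {x | f x = c} := funext hg
  exact ⟨hright, fun S => (galoisConnection_sSup_fiber hsup hright).u_sInf.trans sInf_image.symm⟩
end

section
/- Let (C, ≤) be a complete lattice and let f : C → C be a surjective space function (Scott-continuous, f ⊥ = ⊥, f (a ⊔ b) = f a ⊔ f b) that moreover preserves arbitrary infima: f (⨅ S) = ⨅ {f x | x ∈ S} for every S ⊆ C. Define h : C → C by h c := ⨅ {x ∈ C | f x = c}. Then h is a right inverse of f (f (h c) = c for all c) and h preserves arbitrary suprema: h (⨆ S) = ⨆ {h c | c ∈ S} for every S ⊆ C. -/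
/-!
Since `f` preserves all infima, the infimum of a fibre `f⁻¹(c)` lies in that fibre, so `h` is a
right inverse of `f`. Moreover `h c ≤ x ↔ c ≤ f x`: if `c ≤ f x` then `h c ⊓ x` lies in `f⁻¹(c)`.
Thus `h` is the lower adjoint of `f` and preserves all suprema.
-/

section FibreInf

variable {C : Type*} [CompleteLattice C] {f : C → C}

theorem map_sInf_fibre (hinf : ∀ S : Set C, f (sInf S) = sInf (f '' S))
    {c : C} (hc : c ∈ Set.range f) : f (sInf {x | f x = c}) = c := by
  change f (sInf (f ⁻¹' {c})) = c
  rw [hinf, Set.image_preimage_eq_of_subset (Set.singleton_subset_iff.2 hc), sInf_singleton]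

theorem gc_sInf_fibre (hinf : ∀ S : Set C, f (sInf S) = sInf (f '' S))
    (hsurj : Function.Surjective f) : GaloisConnection (fun c => sInf {x | f x = c}) f := by
  have hmono : Monotone f := OrderHomClass.mono (sInfHom.mk f hinf : sInfHom C C)
  intro c x
  constructor
  · intro hle
    calc c = f (sInf {x | f x = c}) := (map_sInf_fibre hinf (hsurj c)).symm
      _ ≤ f x := hmono hle
  · intro hle
    have hmem : f (sInf {x | f x = c} ⊓ x) = c := by
      rw [← sInf_pair, hinf, Set.image_pair, sInf_pair, map_sInf_fibre hinf (hsurj c),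
        inf_eq_left.mpr hle]
    exact (sInf_le (s := {x | f x = c}) hmem).trans inf_le_right

end FibreInf

theorem stmt_5_general {C : Type*} [CompleteLattice C]
    (f : C → C) (hsurj : Function.Surjective f)
    (hinf : ∀ S : Set C, f (sInf S) = sInf (f '' S))
    (h : C → C) (hh : ∀ c : C, h c = sInf {x : C | f x = c}) :
    (∀ c : C, f (h c) = c) ∧ (∀ S : Set C, h (sSup S) = sSup (h '' S)) := by
  obtain rfl : h = fun c => sInf {x | f x = c} := funext hh
  exact ⟨fun c => map_sInf_fibre hinf (hsurj c),
    fun S => (gc_sInf_fibre hinf hsurj).l_sSup.trans sSup_image.symm⟩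

theorem stmt_5 {C : Type*} [CompleteLattice C]
    (f : C → C) (hf : IsSpaceFunction f) (hsurj : Function.Surjective f)
    (hinf : ∀ S : Set C, f (sInf S) = sInf (f '' S))
    (h : C → C) (hh : ∀ c : C, h c = sInf {x : C | f x = c}) :
    (∀ c : C, f (h c) = c) ∧ (∀ S : Set C, h (sSup S) = sSup (h '' S)) :=
  stmt_5_general f hsurj hinf h hh
end

section
/- Let (C, ≤) be a complete lattice and let f : C → C be a surjective space function (Scott-continuous, f ⊥ = ⊥, f (a ⊔ b) = f a ⊔ f b). Define the projection π(c) := ⨆ {e ∈ C | f e ≤ c}. Then f (π c) = c for every c ∈ C; that is, π is a right inverse (extrusion function) for f. -/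
/-!
The projection `π c = ⨆ {e | f e ≤ c}` is a supremum of a directed set (join-preservation
makes it closed under `⊔`, strictness makes it nonempty), so Scott continuity gives `f (π c) ≤ c`.
Conversely, if `c = f e` then `e ≤ π c`, and monotonicity gives `c ≤ f (π c)`.
-/

section SpaceFunction

variable {C : Type*} [CompleteLattice C] {f : C → C}

def agentProjection (f : C → C) (c : C) : C :=
  sSup {e : C | f e ≤ c}

theorem monotone_of_map_sup (hsup : ∀ a b : C, f (a ⊔ b) = f a ⊔ f b) : Monotone f := by
  intro a b hab
  rw [← sup_eq_right.mpr hab, hsup]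
  exact le_sup_left

theorem directedOn_setOf_map_le (hsup : ∀ a b : C, f (a ⊔ b) = f a ⊔ f b) (c : C) :
    DirectedOn (· ≤ ·) {e : C | f e ≤ c} := by
  intro a ha b hb
  refine ⟨a ⊔ b, ?_, le_sup_left, le_sup_right⟩
  rw [Set.mem_ofPred_eq, hsup]
  exact sup_le ha hb

theorem IsSpaceFunction.map_agentProjection_le (hf : IsSpaceFunction f) (c : C) :
    f (agentProjection f c) ≤ c := by
  obtain ⟨hcont, hbot, hsup⟩ := hf
  have hne : {e : C | f e ≤ c}.Nonempty := ⟨⊥, by simp [hbot]⟩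
  rw [agentProjection, hcont _ hne (directedOn_setOf_map_le hsup c), sSup_le_iff]
  rintro _ ⟨e, he, rfl⟩
  exact he

theorem le_map_agentProjection (hmono : Monotone f) {c : C} (hc : c ∈ Set.range f) :
    c ≤ f (agentProjection f c) := by
  obtain ⟨e, rfl⟩ := hc
  exact hmono (le_sSup (le_refl (f e)))

end SpaceFunction

theorem stmt_7 {C : Type*} [CompleteLattice C]
    (f : C → C) (hf : IsSpaceFunction f) (hsurj : Function.Surjective f)
    (c : C) :
    f (sSup {e : C | f e ≤ c}) = c :=
  le_antisymm (hf.map_agentProjection_le c)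
    (le_map_agentProjection (monotone_of_map_sup hf.2.2) (hsurj c))
end

section
/- Let (C, ≤) be a complete lattice and let S be a set of space functions on C (each Scott-continuous, sending ⊥ to ⊥, and preserving binary joins). Then the pointwise supremum h of S, defined by h c := ⨆ {f c | f ∈ S}, is itself a space function on C, and h is the least upper bound of S in the pointwise order on space functions. -/
/-! Suprema commute with suprema, so Scott continuity, strictness and preservation of binary
joins each pass from the members of `S` to their pointwise supremum. -/

section PointwiseSup

variable {C : Type*} [CompleteLattice C] {S : Set (C → C)}

lemma ScottCont.pointwise_sSup (hS : ∀ f ∈ S, ScottCont f) :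
    ScottCont (fun c => sSup ((fun f : C → C => f c) '' S)) := by
  intro D hne hdir
  simp only [sSup_image]
  calc ⨆ f ∈ S, f (sSup D) = ⨆ f ∈ S, ⨆ d ∈ D, f d :=
        biSup_congr fun f hf => by rw [hS f hf D hne hdir, sSup_image]
    _ = ⨆ d ∈ D, ⨆ f ∈ S, f d := iSup₂_comm _

lemma pointwise_sSup_bot (hS : ∀ f ∈ S, f ⊥ = ⊥) :
    sSup ((fun f : C → C => f ⊥) '' S) = ⊥ :=
  sSup_eq_bot.2 <| Set.forall_mem_image.2 hS

lemma pointwise_sSup_sup (hS : ∀ f ∈ S, ∀ a b : C, f (a ⊔ b) = f a ⊔ f b) (a b : C) :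
    sSup ((fun f : C → C => f (a ⊔ b)) '' S) =
      sSup ((fun f : C → C => f a) '' S) ⊔ sSup ((fun f : C → C => f b) '' S) := by
  simp only [sSup_image, ← iSup_sup_eq]
  exact biSup_congr fun f hf => hS f hf a b

lemma IsSpaceFunction.pointwise_sSup (hS : ∀ f ∈ S, IsSpaceFunction f) :
    IsSpaceFunction (fun c => sSup ((fun f : C → C => f c) '' S)) :=
  ⟨.pointwise_sSup fun f hf => (hS f hf).1, pointwise_sSup_bot fun f hf => (hS f hf).2.1,
    pointwise_sSup_sup fun f hf => (hS f hf).2.2⟩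

end PointwiseSup

theorem stmt_8 {C : Type*} [CompleteLattice C]
    (S : Set (C → C)) (hS : ∀ f ∈ S, IsSpaceFunction f) :
    IsSpaceFunction (fun c => sSup ((fun f : C → C => f c) '' S)) ∧
    (∀ f ∈ S, ∀ c : C, f c ≤ sSup ((fun f : C → C => f c) '' S)) ∧
    (∀ g : C → C, IsSpaceFunction g → (∀ f ∈ S, ∀ c : C, f c ≤ g c) →
      ∀ c : C, sSup ((fun f : C → C => f c) '' S) ≤ g c) :=
  ⟨.pointwise_sSup hS, fun _ hf _ => le_sSup (Set.mem_image_of_mem _ hf),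
    fun _ _ hle c => sSup_le <| Set.forall_mem_image.2 fun f hf => hle f hf c⟩
end

section
/- Let (C, ≤) be a complete lattice and let S be a set of space functions on C (each Scott-continuous, sending ⊥ to ⊥, and preserving binary joins). Then the set {f : C → C | f is a space function and f c ≤ g c for all g ∈ S and all c ∈ C} of space-function lower bounds of S has a greatest element with respect to the pointwise order. (Consequently the set of all space functions on C, ordered pointwise, is a complete lattice.) -/
/-!
Space functions are closed under arbitrary pointwise suprema, since suprema commute with suprema
(of directed sets, of the empty set, of pairs). Hence the pointwise supremum of all space-function
lower bounds of `S` is itself a space function and a lower bound, and it is the greatest one.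
-/

section

variable {C ι : Type*} [CompleteLattice C]

theorem ScottCont.iSup {f : ι → C → C} (hf : ∀ i, ScottCont (f i)) : ScottCont (⨆ i, f i) := by
  intro D hD hdir
  calc (⨆ i, f i) (sSup D) = ⨆ i, ⨆ d ∈ D, f i d := by
        simp only [iSup_apply, hf _ D hD hdir, sSup_image]
    _ = ⨆ d ∈ D, ⨆ i, f i d := iSup_comm.trans (iSup_congr fun _ => iSup_comm)
    _ = sSup ((⨆ i, f i) '' D) := by simp only [sSup_image, iSup_apply]

theorem IsSpaceFunction.iSup {f : ι → C → C} (hf : ∀ i, IsSpaceFunction (f i)) :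
    IsSpaceFunction (⨆ i, f i) := by
  refine ⟨ScottCont.iSup fun i => (hf i).1, ?_, fun a b => ?_⟩
  · simp only [iSup_apply, (hf _).2.1, iSup_bot]
  · simp only [iSup_apply, (hf _).2.2, iSup_sup_eq]

theorem IsSpaceFunction.sSup {F : Set (C → C)} (hF : ∀ f ∈ F, IsSpaceFunction f) :
    IsSpaceFunction (sSup F) := by
  rw [sSup_eq_iSup']
  exact IsSpaceFunction.iSup fun f => hF f f.2

end

theorem stmt_9_general {C : Type*} [CompleteLattice C]
    (S : Set (C → C)) :
    ∃ h : C → C,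
      IsGreatest {f : C → C | IsSpaceFunction f ∧ ∀ g ∈ S, ∀ c : C, f c ≤ g c} h := by
  set F := {f : C → C | IsSpaceFunction f ∧ ∀ g ∈ S, ∀ c : C, f c ≤ g c}
  refine ⟨sSup F, ⟨IsSpaceFunction.sSup fun f hf => hf.1, fun g hg => ?_⟩, fun f hf => le_sSup hf⟩
  exact (sSup_le fun f (hf : f ∈ F) c => hf.2 g hg c :)

theorem stmt_9 {C : Type*} [CompleteLattice C]
    (S : Set (C → C)) (hS : ∀ f ∈ S, IsSpaceFunction f) :
    ∃ h : C → C,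
      IsGreatest {f : C → C | IsSpaceFunction f ∧ ∀ g ∈ S, ∀ c : C, f c ≤ g c} h :=
  stmt_9_general S
end

section
/- Let (C, ≤) be a complete lattice, G a set of agents, sp : G → (C → C) a family of space functions, and for I ⊆ G let Δ_I be the greatest space function f (in the pointwise order) such that f c ≤ sp i c for all i ∈ I and c ∈ C. If J ⊆ I and K ⊆ I, then for all a, b ∈ C: Δ_I (a ⊔ b) ≤ Δ_J a ⊔ Δ_K b. -/
section

variable {C G : Type*} [CompleteLattice C]

def spaceFunctionsBelow (sp : G → C → C) (I : Set G) : Set (C → C) :=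
  {f | IsSpaceFunction f ∧ ∀ i ∈ I, ∀ c : C, f c ≤ sp i c}

theorem spaceFunctionsBelow_anti (sp : G → C → C) {I J : Set G} (hJ : J ⊆ I) :
    spaceFunctionsBelow sp I ⊆ spaceFunctionsBelow sp J :=
  fun _ ⟨hf, hle⟩ => ⟨hf, fun i hi => hle i (hJ hi)⟩

theorem distributedSpace_anti (sp : G → C → C) (Δ : Set G → C → C)
    (hΔ : ∀ I : Set G, IsGreatest (spaceFunctionsBelow sp I) (Δ I))
    {I J : Set G} (hJ : J ⊆ I) : Δ I ≤ Δ J :=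
  (hΔ I).mono (hΔ J) (spaceFunctionsBelow_anti sp hJ)

end

theorem stmt_12_general {C : Type*} {G : Type*} [CompleteLattice C]
    (sp : G → C → C)
    (Δ : Set G → C → C)
    (hΔ : ∀ I : Set G,
      IsGreatest {f : C → C | IsSpaceFunction f ∧ ∀ i ∈ I, ∀ c : C, f c ≤ sp i c} (Δ I))
    (I J K : Set G) (hJ : J ⊆ I) (hK : K ⊆ I) (a b : C) :
    Δ I (a ⊔ b) ≤ Δ J a ⊔ Δ K b := by
  have hsup : Δ I (a ⊔ b) = Δ I a ⊔ Δ I b := (hΔ I).1.1.2.2 a b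
  rw [hsup]
  exact sup_le_sup (distributedSpace_anti sp Δ hΔ hJ a) (distributedSpace_anti sp Δ hΔ hK b)

theorem stmt_12 {C : Type*} {G : Type*} [CompleteLattice C]
    (sp : G → C → C) (hsp : ∀ i : G, IsSpaceFunction (sp i))
    (Δ : Set G → C → C)
    (hΔ : ∀ I : Set G,
      IsGreatest {f : C → C | IsSpaceFunction f ∧ ∀ i ∈ I, ∀ c : C, f c ≤ sp i c} (Δ I))
    (I J K : Set G) (hJ : J ⊆ I) (hK : K ⊆ I) (a b : C) :
    Δ I (a ⊔ b) ≤ Δ J a ⊔ Δ K b :=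
  stmt_12_general sp Δ hΔ I J K hJ hK a b
end

section
/- Let (C, ≤) be a complete lattice in which join distributes over arbitrary meets (c ⊔ ⨅ S = ⨅ {c ⊔ e | e ∈ S}), with implication c → d := ⨅ {e | d ≤ c ⊔ e}. Let G be a set of agents, sp : G → (C → C) a family of space functions, and for I ⊆ G let Δ_I be the greatest space function f (pointwise) such that f ≤ sp i pointwise for all i ∈ I. If J ⊆ I and K ⊆ I, then for all a, c ∈ C: Δ_I c ≤ Δ_J a ⊔ Δ_K (a → c). -/
def himp' {C : Type*} [CompleteLattice C] (c d : C) : C :=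
  sInf {e : C | d ≤ c ⊔ e}

/-!
Since `Δ_I` is a space function below every `sp i` with `i ∈ I`, it lies below `Δ_J` and `Δ_K`.
The frame law gives `c ≤ a ⊔ (a → c)`, so monotonicity and join preservation of `Δ_I` yield
`Δ_I c ≤ Δ_I a ⊔ Δ_I (a → c) ≤ Δ_J a ⊔ Δ_K (a → c)`.
-/

section

variable {C : Type*} [CompleteLattice C]

theorem IsSpaceFunction.monotone {f : C → C} (hf : IsSpaceFunction f) : Monotone f := by
  intro x y hxy
  calc f x ≤ f x ⊔ f y := le_sup_left
    _ = f y := by rw [← hf.2.2, sup_eq_right.2 hxy]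

theorem le_sup_himp'
    (hframe : ∀ (c : C) (S : Set C), c ⊔ sInf S = sInf ((fun e => c ⊔ e) '' S)) (a c : C) :
    c ≤ a ⊔ himp' a c := by
  rw [himp', hframe]
  exact le_sInf fun _ ⟨_, he, hx⟩ => hx ▸ he

def spaceLowerBounds {G : Type*} (sp : G → C → C) (I : Set G) : Set (C → C) :=
  {f | IsSpaceFunction f ∧ ∀ i ∈ I, ∀ c : C, f c ≤ sp i c}

theorem spaceLowerBounds_anti {G : Type*} (sp : G → C → C) {I J : Set G} (hJ : J ⊆ I) :
    spaceLowerBounds sp I ⊆ spaceLowerBounds sp J :=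
  fun _ ⟨hf, hle⟩ => ⟨hf, fun i hi => hle i (hJ hi)⟩

theorem le_of_isGreatest_spaceLowerBounds {G : Type*} {sp : G → C → C} {I J : Set G}
    (hJ : J ⊆ I) {ΔI ΔJ : C → C} (hΔI : IsGreatest (spaceLowerBounds sp I) ΔI)
    (hΔJ : IsGreatest (spaceLowerBounds sp J) ΔJ) : ΔI ≤ ΔJ :=
  hΔJ.2 (spaceLowerBounds_anti sp hJ hΔI.1)

end

theorem stmt_13_general {C : Type*} {G : Type*} [CompleteLattice C]
    (hframe : ∀ (c : C) (S : Set C), c ⊔ sInf S = sInf ((fun e => c ⊔ e) '' S))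
    (sp : G → C → C)
    (Δ : Set G → C → C)
    (hΔ : ∀ I : Set G,
      IsGreatest {f : C → C | IsSpaceFunction f ∧ ∀ i ∈ I, ∀ c : C, f c ≤ sp i c} (Δ I))
    (I J K : Set G) (hJ : J ⊆ I) (hK : K ⊆ I) (a c : C) :
    Δ I c ≤ Δ J a ⊔ Δ K (himp' a c) := by
  have hΔI : IsSpaceFunction (Δ I) := (hΔ I).1.1
  calc Δ I c ≤ Δ I (a ⊔ himp' a c) := hΔI.monotone (le_sup_himp' hframe a c)
    _ = Δ I a ⊔ Δ I (himp' a c) := hΔI.2.2 a _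
    _ ≤ Δ J a ⊔ Δ K (himp' a c) :=
      sup_le_sup (le_of_isGreatest_spaceLowerBounds hJ (hΔ I) (hΔ J) a)
        (le_of_isGreatest_spaceLowerBounds hK (hΔ I) (hΔ K) _)

theorem stmt_13 {C : Type*} {G : Type*} [CompleteLattice C]
    (hframe : ∀ (c : C) (S : Set C), c ⊔ sInf S = sInf ((fun e => c ⊔ e) '' S))
    (sp : G → C → C) (hsp : ∀ i : G, IsSpaceFunction (sp i))
    (Δ : Set G → C → C)
    (hΔ : ∀ I : Set G,
      IsGreatest {f : C → C | IsSpaceFunction f ∧ ∀ i ∈ I, ∀ c : C, f c ≤ sp i c} (Δ I))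
    (I J K : Set G) (hJ : J ⊆ I) (hK : K ⊆ I) (a c : C) :
    Δ I c ≤ Δ J a ⊔ Δ K (himp' a c) :=
  stmt_13_general hframe sp Δ hΔ I J K hJ hK a c
end

section
/- Let (C, ≤) be a complete lattice, G a set of agents, sp : G → (C → C) a family of space functions, and for each I ⊆ G let Δ_I be the greatest space function f (pointwise) such that f ≤ sp i pointwise for all i ∈ I, and Π_I c := ⨆ {e ∈ C | Δ_I e ≤ c}. If J ⊆ I ⊆ G, then for every c ∈ C: Π_J c ≤ Π_I c. -/
theorem sSup_setOf_apply_le_anti {α β : Type*} [CompleteLattice α] [Preorder β] {f g : α → β}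
    (hfg : f ≤ g) (c : β) : sSup {e | g e ≤ c} ≤ sSup {e | f e ≤ c} :=
  sSup_le_sSup fun e he => (hfg e).trans he

theorem stmt_15_general {C : Type*} {G : Type*} [CompleteLattice C]
    (sp : G → C → C)
    (Δ : Set G → C → C)
    (hΔ : ∀ I : Set G,
      IsGreatest {f : C → C | IsSpaceFunction f ∧ ∀ i ∈ I, ∀ c : C, f c ≤ sp i c} (Δ I))
    (I J : Set G) (hJ : J ⊆ I) (c : C) :
    sSup {e : C | Δ J e ≤ c} ≤ sSup {e : C | Δ I e ≤ c} := by
  have hΔ_anti : Δ I ≤ Δ J :=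
    (hΔ I).mono (hΔ J) fun _ ⟨hf, hle⟩ => ⟨hf, fun i hi => hle i (hJ hi)⟩
  exact sSup_setOf_apply_le_anti hΔ_anti c

theorem stmt_15 {C : Type*} {G : Type*} [CompleteLattice C]
    (sp : G → C → C) (hsp : ∀ i : G, IsSpaceFunction (sp i))
    (Δ : Set G → C → C)
    (hΔ : ∀ I : Set G,
      IsGreatest {f : C → C | IsSpaceFunction f ∧ ∀ i ∈ I, ∀ c : C, f c ≤ sp i c} (Δ I))
    (I J : Set G) (hJ : J ⊆ I) (c : C) :
    sSup {e : C | Δ J e ≤ c} ≤ sSup {e : C | Δ I e ≤ c} :=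
  stmt_15_general sp Δ hΔ I J hJ c
end

section
/- Let (C, ≤) be a complete lattice, G a set of agents, sp : G → (C → C) a family of space functions, and for each subset J ⊆ G let Δ_J be the greatest space function f (pointwise) such that f ≤ sp i pointwise for all i ∈ J (assumed to exist for every subset). Define π_i c := ⨆ {e | sp i e ≤ c} and π_I c := ⨆ {π_i c | i ∈ I}. Suppose I ⊆ G, c, e ∈ C, c ≥ Δ_I e, e is a compact element of C, and e ≤ π_I c (e is I-join derivable from c). Then there exists a finite subset J ⊆ I such that c ≥ Δ_J e. -/
/-- Compactness of a lattice element, via directed sets. -/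
def IsCompactElt {C : Type*} [CompleteLattice C] (e : C) : Prop :=
  ∀ D : Set C, D.Nonempty → DirectedOn (· ≤ ·) D → e ≤ sSup D → ∃ d ∈ D, e ≤ d

/-
Compactness of `e` turns `e ≤ π_I c` into `e ≤ ⨆_{i ∈ J} π_i c` for a finite `J ⊆ I`.
Each `π_i c` is the largest element that `sp i` sends below `c` (Scott continuity applied to the
directed set `{d | sp i d ≤ c}`), so `sp i (π_i c) ≤ c`. Since `Δ_J` is monotone, preserves
finite joins and lies below every `sp i` with `i ∈ J`,
`Δ_J e ≤ ⨆_{i ∈ J} Δ_J (π_i c) ≤ ⨆_{i ∈ J} sp i (π_i c) ≤ c`.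
-/

section

variable {C : Type*} [CompleteLattice C]

/-- The paper's agent projection `π_i c` is `spaceProj (sp i) c`. -/
def spaceProj (f : C → C) (c : C) : C := sSup {d | f d ≤ c}

namespace IsSpaceFunction

variable {f : C → C}

theorem monotone_s17 (hf : IsSpaceFunction f) : Monotone f := fun a b hab => by
  rw [← sup_eq_right.2 hab, hf.2.2]
  exact le_sup_left

theorem map_finset_sup (hf : IsSpaceFunction f) {ι : Type*} (s : Finset ι) (g : ι → C) :
    f (s.sup g) = s.sup (f ∘ g) := by
  classical
  induction s using Finset.cons_induction with
  | empty => exact hf.2.1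
  | cons i s _ ih => simp only [Finset.sup_cons, hf.2.2, ih, Function.comp_apply]

theorem map_spaceProj_le (hf : IsSpaceFunction f) (c : C) : f (spaceProj f c) ≤ c := by
  have hdir : DirectedOn (· ≤ ·) {d | f d ≤ c} := fun a ha b hb =>
    ⟨a ⊔ b, (hf.2.2 a b).trans_le (sup_le ha hb), le_sup_left, le_sup_right⟩
  rw [spaceProj, hf.1 {d | f d ≤ c} ⟨⊥, hf.2.1.trans_le bot_le⟩ hdir]
  exact sSup_le (Set.forall_mem_image.2 fun _ hd => hd)

end IsSpaceFunction

theorem IsCompactElt.isCompactElement {e : C} (he : IsCompactElt e) : IsCompactElement e :=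
  (CompleteLattice.isCompactElement_iff_le_of_directed_sSup_le C e).2 he

theorem IsCompactElement.exists_finset_le_sup_of_le_sSup_image {ι : Type*} {e : C}
    (he : IsCompactElement e) {g : ι → C} {I : Set ι} (h : e ≤ sSup (g '' I)) :
    ∃ J : Finset ι, ↑J ⊆ I ∧ e ≤ J.sup g := by
  classical
  obtain ⟨t, htI, het⟩ :=
    (CompleteLattice.isCompactElement_iff_exists_le_sSup_of_le_sSup C e).1 he _ h
  obtain ⟨J, hJI, rfl⟩ := Finset.subset_set_image_iff.1 htI
  exact ⟨J, hJI, by rwa [Finset.sup_image, Function.id_comp] at het⟩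

end

theorem stmt_17_general {C : Type*} {G : Type*} [CompleteLattice C]
    (sp : G → C → C) (hsp : ∀ i : G, IsSpaceFunction (sp i))
    (Δ : Set G → C → C)
    (hΔ : ∀ I : Set G,
      IsGreatest {f : C → C | IsSpaceFunction f ∧ ∀ i ∈ I, ∀ c : C, f c ≤ sp i c} (Δ I))
    (I : Set G) (c e : C)
    (hcomp : IsCompactElt e)
    (hjoin : e ≤ sSup ((fun i : G => sSup {d : C | sp i d ≤ c}) '' I)) :
    ∃ J : Set G, J ⊆ I ∧ J.Finite ∧ Δ J e ≤ c := by
  obtain ⟨J, hJI, heJ⟩ := hcomp.isCompactElement.exists_finset_le_sup_of_le_sSup_image hjoin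
  refine ⟨J, hJI, J.finite_toSet, ?_⟩
  obtain ⟨⟨hΔJ, hΔJ_le⟩, -⟩ := hΔ J
  calc Δ J e ≤ Δ J (J.sup fun i => spaceProj (sp i) c) := hΔJ.monotone_s17 heJ
    _ = J.sup fun i => Δ J (spaceProj (sp i) c) := hΔJ.map_finset_sup J _
    _ ≤ c := Finset.sup_le fun i hi =>
      (hΔJ_le i hi _).trans ((hsp i).map_spaceProj_le c)

theorem stmt_17 {C : Type*} {G : Type*} [CompleteLattice C]
    (sp : G → C → C) (hsp : ∀ i : G, IsSpaceFunction (sp i))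
    (Δ : Set G → C → C)
    (hΔ : ∀ I : Set G,
      IsGreatest {f : C → C | IsSpaceFunction f ∧ ∀ i ∈ I, ∀ c : C, f c ≤ sp i c} (Δ I))
    (I : Set G) (c e : C)
    (hdist : Δ I e ≤ c)
    (hcomp : IsCompactElt e)
    (hjoin : e ≤ sSup ((fun i : G => sSup {d : C | sp i d ≤ c}) '' I)) :
    ∃ J : Set G, J ⊆ I ∧ J.Finite ∧ Δ J e ≤ c :=
  stmt_17_general sp hsp Δ hΔ I c e hcomp hjoin
end

section
/- Let (C, ≤) be a finite complete lattice in which join distributes over arbitrary meets (c ⊔ ⨅ S = ⨅ {c ⊔ e | e ∈ S}). Let G be a finite set of agents, sp : G → (C → C) a family of space functions, and for each I ⊆ G let Δ_I be the greatest space function f (pointwise) such that f ≤ sp i pointwise for all i ∈ I. If I = J ∪ K, then for every c ∈ C: Δ_I c = ⨅ {Δ_J a ⊔ Δ_K b | a, b ∈ C and a ⊔ b ≥ c}. -/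
section

variable {C : Type*} [CompleteLattice C]

theorem DirectedOn.sSup_mem_of_finite {D : Set C} (hne : D.Nonempty) (hfin : D.Finite)
    (hdir : DirectedOn (· ≤ ·) D) : sSup D ∈ D := by
  obtain ⟨b, hb, hle⟩ := (le_sSup_iff_of_directedOn hne hfin hdir).1 le_rfl
  rwa [le_antisymm hle (le_sSup hb)]

theorem Monotone.scottCont [Finite C] {f : C → C} (hf : Monotone f) : ScottCont f :=
  fun D hne hdir =>
    (IsGreatest.csSup_eq <|
      hf.map_isGreatest ⟨hdir.sSup_mem_of_finite hne D.toFinite, fun _ => le_sSup⟩).symm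

theorem isSpaceFunction_of_map_sup [Finite C] {f : C → C} (hbot : f ⊥ = ⊥)
    (hsup : ∀ a b, f (a ⊔ b) = f a ⊔ f b) : IsSpaceFunction f :=
  ⟨(Monotone.of_map_sup hsup).scottCont, hbot, hsup⟩

namespace SpaceFunction

def supConv (f g : C → C) (c : C) : C :=
  sInf {x : C | ∃ a b : C, c ≤ a ⊔ b ∧ x = f a ⊔ g b}

variable {f g : C → C}

theorem supConv_le (f g : C → C) {a b c : C} (h : c ≤ a ⊔ b) : supConv f g c ≤ f a ⊔ g b :=
  sInf_le ⟨a, b, h, rfl⟩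

theorem monotone_supConv (f g : C → C) : Monotone (supConv f g) := by
  intro c d hcd
  apply sInf_le_sInf
  rintro x ⟨a, b, hab, rfl⟩
  exact ⟨a, b, hcd.trans hab, rfl⟩

theorem supConv_le_left (hg : g ⊥ = ⊥) (c : C) : supConv f g c ≤ f c := by
  simpa [hg] using supConv_le f g (a := c) (b := ⊥) (by simp)

theorem supConv_le_right (hf : f ⊥ = ⊥) (c : C) : supConv f g c ≤ g c := by
  simpa [hf] using supConv_le f g (a := ⊥) (b := c) (by simp)

theorem supConv_bot (hf : f ⊥ = ⊥) (hg : g ⊥ = ⊥) : supConv f g ⊥ = ⊥ :=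
  le_bot_iff.1 <| (supConv_le_left hg ⊥).trans_eq hf

theorem le_supConv {h : C → C} (hh : IsSpaceFunction h) (hhf : ∀ c, h c ≤ f c)
    (hhg : ∀ c, h c ≤ g c) (c : C) : h c ≤ supConv f g c := by
  refine le_sInf ?_
  rintro _ ⟨a, b, hab, rfl⟩
  calc h c ≤ h (a ⊔ b) := hh.monotone hab
    _ = h a ⊔ h b := hh.2.2 a b
    _ ≤ f a ⊔ g b := sup_le_sup (hhf a) (hhg b)

theorem supConv_map_sup
    (hframe : ∀ (c : C) (S : Set C), c ⊔ sInf S = sInf ((fun e => c ⊔ e) '' S))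
    (hf : ∀ a b, f (a ⊔ b) = f a ⊔ f b) (hg : ∀ a b, g (a ⊔ b) = g a ⊔ g b) (c d : C) :
    supConv f g (c ⊔ d) = supConv f g c ⊔ supConv f g d := by
  refine le_antisymm ?_ (sup_le (monotone_supConv f g le_sup_left)
    (monotone_supConv f g le_sup_right))
  -- distribute `⊔` over both infima and compare term by term
  conv_rhs => unfold supConv
  rw [hframe]
  refine le_sInf ?_
  rintro _ ⟨_, ⟨a₂, b₂, hd, rfl⟩, rfl⟩
  dsimp only
  rw [sup_comm (sInf _), hframe]
  refine le_sInf ?_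
  rintro _ ⟨_, ⟨a₁, b₁, hc, rfl⟩, rfl⟩
  calc supConv f g (c ⊔ d) ≤ f (a₁ ⊔ a₂) ⊔ g (b₁ ⊔ b₂) :=
        supConv_le f g <| (sup_le_sup hc hd).trans_eq (sup_sup_sup_comm a₁ b₁ a₂ b₂)
    _ = f a₂ ⊔ g b₂ ⊔ (f a₁ ⊔ g b₁) := by rw [hf, hg, sup_sup_sup_comm, sup_comm]

theorem isSpaceFunction_supConv [Finite C]
    (hframe : ∀ (c : C) (S : Set C), c ⊔ sInf S = sInf ((fun e => c ⊔ e) '' S))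
    (hf : IsSpaceFunction f) (hg : IsSpaceFunction g) : IsSpaceFunction (supConv f g) :=
  isSpaceFunction_of_map_sup (supConv_bot hf.2.1 hg.2.1) (supConv_map_sup hframe hf.2.2 hg.2.2)

end SpaceFunction

end

open SpaceFunction in
theorem stmt_18_general {C : Type*} {G : Type*} [CompleteLattice C] [Finite C]
    (hframe : ∀ (c : C) (S : Set C), c ⊔ sInf S = sInf ((fun e => c ⊔ e) '' S))
    (sp : G → C → C)
    (Δ : Set G → C → C)
    (hΔ : ∀ I : Set G,
      IsGreatest {f : C → C | IsSpaceFunction f ∧ ∀ i ∈ I, ∀ c : C, f c ≤ sp i c} (Δ I))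
    (J K : Set G) (c : C) :
    Δ (J ∪ K) c = sInf {x : C | ∃ a b : C, c ≤ a ⊔ b ∧ x = Δ J a ⊔ Δ K b} := by
  obtain ⟨⟨hJ, hJsp⟩, -⟩ := hΔ J
  obtain ⟨⟨hK, hKsp⟩, -⟩ := hΔ K
  obtain ⟨⟨hJK, hJKsp⟩, hJK_max⟩ := hΔ (J ∪ K)
  have hle_J : ∀ x, Δ (J ∪ K) x ≤ Δ J x :=
    (hΔ J).2 ⟨hJK, fun i hi => hJKsp i (Or.inl hi)⟩
  have hle_K : ∀ x, Δ (J ∪ K) x ≤ Δ K x :=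
    (hΔ K).2 ⟨hJK, fun i hi => hJKsp i (Or.inr hi)⟩
  have hconv_sp : ∀ i ∈ J ∪ K, ∀ x, supConv (Δ J) (Δ K) x ≤ sp i x := by
    rintro i (hi | hi) x
    · exact (supConv_le_left hK.2.1 x).trans (hJsp i hi x)
    · exact (supConv_le_right hJ.2.1 x).trans (hKsp i hi x)
  exact le_antisymm (le_supConv hJK hle_J hle_K c)
    (hJK_max ⟨isSpaceFunction_supConv hframe hJ hK, hconv_sp⟩ c)

theorem stmt_18 {C : Type*} {G : Type*} [CompleteLattice C] [Finite C] [Finite G]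
    (hframe : ∀ (c : C) (S : Set C), c ⊔ sInf S = sInf ((fun e => c ⊔ e) '' S))
    (sp : G → C → C) (hsp : ∀ i : G, IsSpaceFunction (sp i))
    (Δ : Set G → C → C)
    (hΔ : ∀ I : Set G,
      IsGreatest {f : C → C | IsSpaceFunction f ∧ ∀ i ∈ I, ∀ c : C, f c ≤ sp i c} (Δ I))
    (J K : Set G) (c : C) :
    Δ (J ∪ K) c = sInf {x : C | ∃ a b : C, c ≤ a ⊔ b ∧ x = Δ J a ⊔ Δ K b} :=
  stmt_18_general hframe sp Δ hΔ J K c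
end
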